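/- Let L > 0 and consider f : ℝ → ℝ, f(x) = (L/2)x². For any x_0 ∈ ℝ, k ≥ 1 and N = 2^k − 1, gradient descent with stepsizes h = h_left^(k) (iterates x_{i+1} = x_i − (h_i/L) f′(x_i)) attains the gradient-norm bound with equality: (1/2)|f′(x_N)|² = L(f(x_0) − min f) / r_k. -/
import Mathlib


open Finset

/-- The silver ratio ρ = 1 + √2. -/
noncomputable def rho : ℝ := 1 + Real.sqrt 2

/-- Entry `i` of the silver stepsize schedule π^(k) ∈ ℝ^(2^k − 1) (0-indexed):
π^(1) = [√2], π^(k+1) = [π^(k), β_k, π^(k)] where β_k = 1 + ρ^(k−1). -/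
noncomputable def piSilver : ℕ → ℕ → ℝ
  | 0, _ => 0
  | 1, _ => Real.sqrt 2
  | k + 2, i =>
      if i < 2 ^ (k + 1) - 1 then piSilver (k + 1) i
      else if i = 2 ^ (k + 1) - 1 then 1 + rho ^ k
      else piSilver (k + 1) (i - 2 ^ (k + 1))

/-- The sequence r_k: r_1 = 4, r_{k+1} = (r_k + 4ρ^k + √(r_k(r_k + 8ρ^k)))/2. -/
noncomputable def rseq : ℕ → ℝ
  | 0 => 0
  | 1 => 4
  | k + 2 =>
      (rseq (k + 1) + 4 * rho ^ (k + 1)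
        + Real.sqrt (rseq (k + 1) * (rseq (k + 1) + 8 * rho ^ (k + 1)))) / 2

/-- α_k = 1 + (√(r_k(r_k + 8ρ^k)) − r_k)/4. -/
noncomputable def alphaSeq (k : ℕ) : ℝ :=
  1 + (Real.sqrt (rseq k * (rseq k + 8 * rho ^ k)) - rseq k) / 4

/-- Entry `i` of h_right^(k) ∈ ℝ^(2^k − 1) (0-indexed):
h_right^(1) = [3/2], h_right^(k+1) = [π^(k), α_k, h_right^(k)]. -/
noncomputable def hright : ℕ → ℕ → ℝ
  | 0, _ => 0
  | 1, _ => 3 / 2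
  | k + 2, i =>
      if i < 2 ^ (k + 1) - 1 then piSilver (k + 1) i
      else if i = 2 ^ (k + 1) - 1 then alphaSeq (k + 1)
      else hright (k + 1) (i - 2 ^ (k + 1))

/-- h_left^(k) is h_right^(k) with its entries reversed. -/
noncomputable def hleft (k i : ℕ) : ℝ := hright k (2 ^ k - 2 - i)

lemma rho_pos : (0:ℝ) < rho := by
  have := Real.sqrt_nonneg 2; unfold rho; linarith

lemma rseq_pos : ∀ k : ℕ, 0 < rseq (k + 1) := by
  intro k
  induction k with
  | zero => norm_num [rseq]
  | succ n ih =>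
      show 0 < rseq (n + 2)
      simp only [rseq]
      have h1 : (0:ℝ) < rho ^ (n+1) := pow_pos rho_pos _
      have h2 := Real.sqrt_nonneg (rseq (n + 1) * (rseq (n + 1) + 8 * rho ^ (n + 1)))
      positivity

lemma prod_split (f : ℕ → ℝ) (k : ℕ) :
    ∏ i ∈ range (2 ^ (k + 2) - 1), f i
      = ((∏ i ∈ range (2 ^ (k + 1) - 1), f i) * f (2 ^ (k + 1) - 1))
        * ∏ i ∈ range (2 ^ (k + 1) - 1), f (2 ^ (k + 1) + i) := by
  have h1 : 1 ≤ 2 ^ (k + 1) := Nat.one_le_two_pow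
  have h : 2 ^ (k + 2) - 1 = 2 ^ (k + 1) + (2 ^ (k + 1) - 1) := by
    have : 2 ^ (k + 2) = 2 ^ (k+1) + 2 ^ (k+1) := by ring
    omega
  rw [h, Finset.prod_range_add]
  have h2 : 2 ^ (k + 1) = (2 ^ (k + 1) - 1) + 1 := by omega
  have h2' : ∏ i ∈ range (2 ^ (k + 1)), f i
      = (∏ i ∈ range (2 ^ (k + 1) - 1), f i) * f (2 ^ (k + 1) - 1) := by
    conv_lhs => rw [h2]
    exact Finset.prod_range_succ f _
  rw [h2']

lemma piSilver_left (k i : ℕ) (hi : i < 2 ^ (k + 1) - 1) :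
    piSilver (k + 2) i = piSilver (k + 1) i := by
  simp [piSilver, hi]

lemma piSilver_mid (k : ℕ) : piSilver (k + 2) (2 ^ (k + 1) - 1) = 1 + rho ^ k := by
  simp [piSilver]

lemma piSilver_right (k i : ℕ) :
    piSilver (k + 2) (2 ^ (k + 1) + i) = piSilver (k + 1) i := by
  have h1 : 1 ≤ 2 ^ (k + 1) := Nat.one_le_two_pow
  have hn1 : ¬ (2 ^ (k + 1) + i < 2 ^ (k + 1) - 1) := by omega
  have hn2 : ¬ (2 ^ (k + 1) + i = 2 ^ (k + 1) - 1) := by omega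
  simp [piSilver, hn1, hn2]

lemma hright_left (k i : ℕ) (hi : i < 2 ^ (k + 1) - 1) :
    hright (k + 2) i = piSilver (k + 1) i := by
  simp [hright, hi]

lemma hright_mid (k : ℕ) : hright (k + 2) (2 ^ (k + 1) - 1) = alphaSeq (k + 1) := by
  simp [hright]

lemma hright_right (k i : ℕ) :
    hright (k + 2) (2 ^ (k + 1) + i) = hright (k + 1) i := by
  have h1 : 1 ≤ 2 ^ (k + 1) := Nat.one_le_two_pow
  have hn1 : ¬ (2 ^ (k + 1) + i < 2 ^ (k + 1) - 1) := by omega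
  have hn2 : ¬ (2 ^ (k + 1) + i = 2 ^ (k + 1) - 1) := by omega
  simp [hright, hn1, hn2]

lemma prod_pi : ∀ k : ℕ,
    rho ^ (k + 1) * ∏ i ∈ range (2 ^ (k + 1) - 1), (1 - piSilver (k + 1) i) = -1 := by
  intro k
  induction k with
  | zero =>
      have h2 : Real.sqrt 2 ^ 2 = 2 := Real.sq_sqrt (by norm_num)
      simp [piSilver, rho]
      nlinarith [h2]
  | succ n ih =>
      show rho ^ (n + 2) * ∏ i ∈ range (2 ^ (n + 2) - 1), (1 - piSilver (n + 2) i) = -1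
      rw [prod_split (fun i => 1 - piSilver (n + 2) i) n]
      have e1 : ∏ i ∈ range (2 ^ (n + 1) - 1), (1 - piSilver (n + 2) i)
          = ∏ i ∈ range (2 ^ (n + 1) - 1), (1 - piSilver (n + 1) i) :=
        Finset.prod_congr rfl fun i hi => by
          rw [piSilver_left n i (Finset.mem_range.mp hi)]
      have e2 : ∏ i ∈ range (2 ^ (n + 1) - 1), (1 - piSilver (n + 2) (2 ^ (n + 1) + i))
          = ∏ i ∈ range (2 ^ (n + 1) - 1), (1 - piSilver (n + 1) i) :=
        Finset.prod_congr rfl fun i hi => by rw [piSilver_right n i]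
      rw [e2, e1, piSilver_mid]
      set P := ∏ i ∈ range (2 ^ (n + 1) - 1), (1 - piSilver (n + 1) i) with hP
      linear_combination (1 - rho ^ (n + 1) * P) * ih

lemma prod_h : ∀ k : ℕ,
    (∏ i ∈ range (2 ^ (k + 1) - 1), (1 - hright (k + 1) i)) ^ 2 * rseq (k + 1) = 1 := by
  intro k
  induction k with
  | zero => norm_num [hright, rseq]
  | succ n ih =>
      show (∏ i ∈ range (2 ^ (n + 2) - 1), (1 - hright (n + 2) i)) ^ 2 * rseq (n + 2) = 1
      rw [prod_split (fun i => 1 - hright (n + 2) i) n]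
      have e1 : ∏ i ∈ range (2 ^ (n + 1) - 1), (1 - hright (n + 2) i)
          = ∏ i ∈ range (2 ^ (n + 1) - 1), (1 - piSilver (n + 1) i) :=
        Finset.prod_congr rfl fun i hi => by
          rw [hright_left n i (Finset.mem_range.mp hi)]
      have e2 : ∏ i ∈ range (2 ^ (n + 1) - 1), (1 - hright (n + 2) (2 ^ (n + 1) + i))
          = ∏ i ∈ range (2 ^ (n + 1) - 1), (1 - hright (n + 1) i) :=
        Finset.prod_congr rfl fun i hi => by rw [hright_right n i]
      rw [e2, e1, hright_mid]
      set P := ∏ i ∈ range (2 ^ (n + 1) - 1), (1 - piSilver (n + 1) i) with hPdef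
      set H := ∏ i ∈ range (2 ^ (n + 1) - 1), (1 - hright (n + 1) i) with hHdef
      set r := rseq (n + 1) with hrdef
      set t := rho ^ (n + 1) with htdef
      set s := Real.sqrt (r * (r + 8 * t)) with hsdef
      have hr : 0 < r := rseq_pos n
      have ht : 0 < t := pow_pos rho_pos _
      have h3 : s ^ 2 = r * (r + 8 * t) := Real.sq_sqrt (by positivity)
      have hp := prod_pi n
      rw [← hPdef, ← htdef] at hp
      have hPt : (t * P) ^ 2 = 1 := by rw [hp]; norm_num
      have halpha : alphaSeq (n + 1) = 1 + (s - r) / 4 := by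
        rw [alphaSeq, ← hrdef, ← htdef, ← hsdef]
      have hr2 : rseq (n + 2) = (r + 4 * t + s) / 2 := by
        rw [rseq, ← hrdef, ← htdef, ← hsdef]
      rw [halpha, hr2]
      have key : (1 - (1 + (s - r) / 4)) ^ 2 * ((r + 4 * t + s) / 2) = t ^ 2 * r := by
        linear_combination ((s + 4 * t - r) / 32) * h3
      linear_combination P ^ 2 * H ^ 2 * key + H ^ 2 * r * hPt + ih

/-- **Tightness on quadratics (gradient norm).** For `f(x) = (L/2)x²`, gradient descent
with stepsizes `h_left^(k)` and `N = 2^k − 1` attains the gradient-norm bound with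
equality: `(1/2)|f′(x_N)|² = L(f(x_0) − min f)/r_k` (here `min f = f(0) = 0`). -/
theorem quadratic_tightness_hleft (L : ℝ) (hL : 0 < L) (k : ℕ) (hk : 1 ≤ k)
    (x0 : ℝ) (x : ℕ → ℝ) (hx0 : x 0 = x0)
    (hx : ∀ i < 2 ^ k - 1,
      x (i + 1) = x i - (hleft k i / L) * deriv (fun y : ℝ => L / 2 * y ^ 2) (x i)) :
    (1 / 2) * |deriv (fun y : ℝ => L / 2 * y ^ 2) (x (2 ^ k - 1))| ^ 2
      = L * ((L / 2 * x0 ^ 2) - (L / 2 * (0 : ℝ) ^ 2)) / rseq k := by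
  have hderiv : ∀ z : ℝ, deriv (fun y : ℝ => L / 2 * y ^ 2) z = L * z := by
    intro z
    have h := ((hasDerivAt_pow 2 z).const_mul (L / 2)).deriv
    rw [h]; push_cast; ring
  -- iterate formula
  have hiter : ∀ i ≤ 2 ^ k - 1, x i = (∏ j ∈ range i, (1 - hleft k j)) * x0 := by
    intro i hi
    induction i with
    | zero => simpa using hx0
    | succ n ihn =>
        have hn : n < 2 ^ k - 1 := by omega
        rw [hx n hn, hderiv, ihn (by omega), Finset.prod_range_succ]
        field_simp
  rw [hderiv, hiter _ le_rfl]
  -- reverse product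
  have hrev : (∏ j ∈ range (2 ^ k - 1), (1 - hleft k j))
      = ∏ j ∈ range (2 ^ k - 1), (1 - hright k j) := by
    rw [← Finset.prod_range_reflect (fun j => 1 - hright k j) (2 ^ k - 1)]
    refine Finset.prod_congr rfl fun j hj => ?_
    have : 2 ^ k - 1 - 1 - j = 2 ^ k - 2 - j := by omega
    rw [hleft, this]
  rw [hrev]
  obtain ⟨m, rfl⟩ : ∃ m, k = m + 1 := ⟨k - 1, by omega⟩
  have hH := prod_h m
  have hr : rseq (m + 1) ≠ 0 := ne_of_gt (rseq_pos m)
  rw [eq_div_iff hr, sq_abs]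
  set H := ∏ j ∈ range (2 ^ (m + 1) - 1), (1 - hright (m + 1) j)
  linear_combination (L ^ 2 * x0 ^ 2 / 2) * hH
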